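/- arXiv:1409.0064 — 7 statements merged into one kernel-verified Lean document; each statement's English description precedes it below -/
import Mathlib

section
/- Let i and j be real numbers with 0 < i, j < 1 and i + j = 1, set σ := min{i, j}, and let a, b ∈ ℝ. If liminf_{q→∞} q^{1/σ} · max{‖qa‖, ‖qb‖} = 0, where the liminf is over positive integers q, then there is no x ∈ ℝ with (x, ax + b) ∈ Bad(i,j); that is, Bad(i,j) ∩ {(x, ax + b) : x ∈ ℝ} = ∅. -/
open Filter Set

/-- Distance from a real number to the nearest integer. -/
noncomputable def distNearestInt (t : ℝ) : ℝ := |t - round t|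

/-- The inhomogeneous set `Bad_θ(i,j)` of `(i,j)`-badly approximable pairs;
the homogeneous set `Bad(i,j)` is `badPair i j (0, 0)`. -/
def badPair (i j : ℝ) (θ : ℝ × ℝ) : Set (ℝ × ℝ) :=
  {p : ℝ × ℝ | ∃ c : ℝ, 0 < c ∧ ∀ q : ℕ, 0 < q →
    c / (q : ℝ) < max (distNearestInt ((q : ℝ) * p.1 - θ.1) ^ (1 / i))
                      (distNearestInt ((q : ℝ) * p.2 - θ.2) ^ (1 / j))}

/-!
If `p = round (q a)` and `r = round (q b)` with `Δ = max ‖q a‖ ‖q b‖`, every point `(x, y)` of the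
line `y = a x + b` satisfies `p x - q y = -r + θ` with `|θ| ≤ (|x| + 1) Δ`. Points obeying such an
almost-integral relation are well approximable: after dividing out `gcd (p, q)` and absorbing `r`
by Bézout, Dirichlet's theorem for one coordinate (the one with the larger weighted coefficient)
transfers through the relation to the other. At the scale `N ≍ q ^ (1 / σ)`, where `Δ q ^ (1 / σ)`
is as small as we like, the error `θ` is negligible and this yields `n ≤ N` with
`‖n x‖ ≤ (c / N) ^ i` and `‖n y‖ ≤ (c / N) ^ j`, contradicting badness with constant `c`.
-/

theorem exists_int_abs_mul_sub_le_of_relation_of_le {X Y θ α β : ℝ} {P Q : ℤ} (hQ : Q ≠ 0)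
    (hα : 0 < α) (hα1 : α ≤ 1) (hrel : P * X - Q * Y = θ) (hPQ : |(P : ℝ)| * α ≤ |(Q : ℝ)| * β)
    (hθ : 6 * |θ| ≤ α * β) :
    ∃ n k : ℤ, 0 < n ∧ n * α ≤ 3 * |(Q : ℝ)| ∧ |n * X - k * Q| ≤ α ∧ |n * Y - k * P| ≤ β := by
  have hQ1 : (1 : ℝ) ≤ |(Q : ℝ)| := by exact_mod_cast Int.one_le_abs hQ
  -- Dirichlet at height `M ≈ 2 |Q| / α` leaves half of the budget `|Q| β` for the term `n θ`.
  set M := ⌈2 * |(Q : ℝ)| / α⌉₊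
  have hM : 0 < M := Nat.ceil_pos.2 (by positivity)
  have hMlo : 2 * |(Q : ℝ)| ≤ M * α := (div_le_iff₀ hα).1 (Nat.le_ceil _)
  have hMhi : M * α ≤ 3 * |(Q : ℝ)| := by
    have h := Nat.ceil_lt_add_one (by positivity : 0 ≤ 2 * |(Q : ℝ)| / α)
    have : 2 * |(Q : ℝ)| / α * α = 2 * |(Q : ℝ)| := div_mul_cancel₀ _ hα.ne'
    nlinarith [mul_lt_mul_of_pos_right h hα]
  obtain ⟨k, n, hn, hnM, hdir⟩ := Real.exists_int_int_abs_mul_sub_le (X / Q) hM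
  have hnα : n * α ≤ 3 * |(Q : ℝ)| :=
    le_trans (mul_le_mul_of_nonneg_right (by exact_mod_cast hnM) hα.le) hMhi
  have hX : |n * X - k * Q| ≤ α / 2 := by
    have hQ0 : (Q : ℝ) ≠ 0 := by exact_mod_cast hQ
    calc |n * X - k * Q| = |n * (X / Q) - k| * |(Q : ℝ)| := by
          rw [← abs_mul]; congr 1; field_simp
      _ ≤ 1 / (M + 1) * |(Q : ℝ)| := by gcongr
      _ ≤ α / 2 := by
          rw [div_mul_eq_mul_div, one_mul, div_le_iff₀ (by positivity)]
          nlinarith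
  refine ⟨n, k, hn, hnα, by linarith, ?_⟩
  have key : Q * (n * Y - k * P) = P * (n * X - k * Q) - n * θ := by
    linear_combination (-(n : ℝ)) * hrel
  have hnθ : n * |θ| ≤ |(Q : ℝ)| * β / 2 := by
    have hn0 : (0 : ℝ) ≤ n := by exact_mod_cast hn.le
    have hβ : 0 ≤ β := (mul_nonneg_iff_of_pos_left hα).1 (by linarith [abs_nonneg θ])
    nlinarith [mul_le_mul_of_nonneg_left hθ hn0, mul_le_mul_of_nonneg_right hnα hβ]
  have : |(Q : ℝ)| * |n * Y - k * P| ≤ |(Q : ℝ)| * β := by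
    calc |(Q : ℝ)| * |n * Y - k * P| = |P * (n * X - k * Q) - n * θ| := by rw [← abs_mul, key]
      _ ≤ |(P : ℝ)| * (α / 2) + n * |θ| := by
          refine (abs_sub _ _).trans (add_le_add ?_ ?_)
          · rw [abs_mul]; gcongr
          · rw [abs_mul, abs_of_pos (by exact_mod_cast hn)]
      _ ≤ |(Q : ℝ)| * β := by linarith
  exact le_of_mul_le_mul_left this (by linarith)

theorem exists_int_abs_mul_sub_le_of_relation {X Y θ α β D : ℝ} {P Q : ℤ} (hQ : Q ≠ 0)
    (hα : 0 < α) (hα1 : α ≤ 1) (hβ : 0 < β) (hβ1 : β ≤ 1) (hrel : P * X - Q * Y = θ)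
    (hθ : 6 * |θ| ≤ α * β) (hQD : 3 * |(Q : ℝ)| * β ≤ D) (hPD : 3 * |(P : ℝ)| * α ≤ D) :
    ∃ n k : ℤ, 0 < n ∧ n * (α * β) ≤ D ∧ |n * X - k * Q| ≤ α ∧ |n * Y - k * P| ≤ β := by
  rcases le_or_gt (|(P : ℝ)| * α) (|(Q : ℝ)| * β) with h | h
  · obtain ⟨n, k, hn, hnα, hX, hY⟩ :=
      exists_int_abs_mul_sub_le_of_relation_of_le hQ hα hα1 hrel h hθ
    exact ⟨n, k, hn, by nlinarith, hX, hY⟩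
  · have hP : P ≠ 0 := by
      rintro rfl
      simp only [Int.cast_zero, abs_zero, zero_mul] at h
      nlinarith [abs_nonneg (Q : ℝ)]
    obtain ⟨n, k, hn, hnβ, hY, hX⟩ := exists_int_abs_mul_sub_le_of_relation_of_le
      (X := Y) (Y := X) (θ := -θ) (P := Q) hP hβ
      hβ1 (by linear_combination -hrel) h.le (by rwa [abs_neg, mul_comm β])
    exact ⟨n, k, hn, by nlinarith, hX, hY⟩

theorem exists_nat_distNearestInt_le_of_relation {x y θ α β D : ℝ} {p q s : ℤ} (hq : q ≠ 0)
    (hα : 0 < α) (hα1 : α ≤ 1) (hβ : 0 < β) (hβ1 : β ≤ 1) (hrel : p * x - q * y = s + θ)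
    (hθ : 6 * |θ| ≤ α * β) (hqD : 3 * |(q : ℝ)| * β ≤ D) (hpD : 3 * |(p : ℝ)| * α ≤ D) :
    ∃ n : ℕ, 0 < n ∧ n * (α * β) ≤ D ∧
      distNearestInt (n * x) ≤ α ∧ distNearestInt (n * y) ≤ β := by
  obtain ⟨g, p', q', hg, hcop, rfl, rfl⟩ :=
    Int.exists_gcd_one' (Int.gcd_pos_of_ne_zero_right p hq)
  obtain ⟨u, v, huv⟩ := Int.isCoprime_iff_gcd_eq_one.2 hcop
  have huv' : (u : ℝ) * p' + v * q' = 1 := by exact_mod_cast huv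
  have hg0 : (0 : ℝ) < g := by exact_mod_cast hg
  push_cast at hrel hqD hpD
  rw [abs_mul, Nat.abs_cast] at hqD hpD
  obtain ⟨n, k, hn, hnD, hX, hY⟩ := exists_int_abs_mul_sub_le_of_relation
    (X := g * x - u * s) (Y := g * y + v * s) (D := D / g) (P := p') (left_ne_zero_of_mul hq)
    hα hα1 hβ hβ1 (by linear_combination hrel - s * huv') hθ
    (by rw [le_div_iff₀ hg0]; linarith) (by rw [le_div_iff₀ hg0]; linarith)
  lift n to ℕ using hn.le
  refine ⟨g * n, Nat.mul_pos hg (by exact_mod_cast hn), ?_, ?_, ?_⟩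
  · rw [le_div_iff₀ hg0] at hnD
    push_cast at hnD ⊢
    linarith
  · refine (round_le _ (n * u * s + k * q')).trans (le_of_eq_of_le ?_ hX)
    push_cast
    ring_nf
  · refine (round_le _ (-(n * v * s) + k * p')).trans (le_of_eq_of_le ?_ hY)
    push_cast
    ring_nf

theorem exists_nat_max_rpow_distNearestInt_le_of_relation {i j : ℝ} (hi : 0 < i) (hj : 0 < j)
    (hij : i + j = 1) {x y θ δ D : ℝ} {p q s : ℤ} (hq : q ≠ 0) (hδ : 0 < δ) (hδ1 : δ ≤ 1)
    (hrel : p * x - q * y = s + θ) (hθ : 6 * |θ| ≤ δ) (hqD : 3 * |(q : ℝ)| * δ ^ j ≤ D)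
    (hpD : 3 * |(p : ℝ)| * δ ^ i ≤ D) :
    ∃ n : ℕ, 0 < n ∧
      max (distNearestInt (n * x) ^ (1 / i)) (distNearestInt (n * y) ^ (1 / j)) ≤ D / n := by
  have hδij : δ ^ i * δ ^ j = δ := by rw [← Real.rpow_add hδ, hij, Real.rpow_one]
  obtain ⟨n, hn, hnD, hx, hy⟩ := exists_nat_distNearestInt_le_of_relation hq
    (Real.rpow_pos_of_pos hδ i) (Real.rpow_le_one hδ.le hδ1 hi.le)
    (Real.rpow_pos_of_pos hδ j) (Real.rpow_le_one hδ.le hδ1 hj.le) hrel (hδij.symm ▸ hθ) hqD hpD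
  have hδD : δ ≤ D / n := by
    rw [le_div_iff₀ (by exact_mod_cast hn), mul_comm, ← hδij]
    exact hnD
  have hroot {t e : ℝ} (he : 0 < e) (ht : 0 ≤ t) (hte : t ≤ δ ^ e) : t ^ (1 / e) ≤ D / n := by
    rw [one_div, Real.rpow_inv_le_iff_of_pos ht (hδ.le.trans hδD) he]
    exact hte.trans (Real.rpow_le_rpow hδ.le hδD he.le)
  exact ⟨n, hn, max_le (hroot hi (abs_nonneg _) hx) (hroot hj (abs_nonneg _) hy)⟩

theorem rpow_mul_le_mul_rpow_one_div_rpow {T t σ e : ℝ} (hT : 0 ≤ T) (ht : 1 ≤ t) (hσ : 0 < σ)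
    (hσe : σ ≤ e) : T ^ e * t ≤ (T * t ^ (1 / σ)) ^ e := by
  rw [Real.mul_rpow hT (by positivity), ← Real.rpow_mul (by positivity), one_div_mul_eq_div]
  gcongr
  calc t = t ^ (1 : ℝ) := (Real.rpow_one t).symm
    _ ≤ t ^ (e / σ) := Real.rpow_le_rpow_of_exponent_le ht ((one_le_div hσ).2 hσe)

theorem abs_round_le (t : ℝ) : |(round t : ℝ)| ≤ |t| + 1 / 2 := by
  have := abs_sub_round t
  calc |(round t : ℝ)| = |t - (t - round t)| := by rw [sub_sub_cancel]
    _ ≤ |t| + |t - round t| := abs_sub _ _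
    _ ≤ |t| + 1 / 2 := by linarith

theorem exists_pos_lt_of_liminf_ofReal_eq_zero {f : ℕ → ℝ}
    (hf : atTop.liminf (fun n => ENNReal.ofReal (f n)) = 0) {ε : ℝ} (hε : 0 < ε) :
    ∃ n, 0 < n ∧ f n < ε := by
  have hfreq : ∃ᶠ n in atTop, ENNReal.ofReal (f n) < ENNReal.ofReal ε :=
    frequently_lt_of_liminf_lt (by isBoundedDefault) (hf ▸ ENNReal.ofReal_pos.2 hε)
  obtain ⟨n, hn, hn0⟩ := (hfreq.and_eventually (eventually_gt_atTop 0)).exists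
  exact ⟨n, hn0, (ENNReal.ofReal_lt_ofReal_iff hε).1 hn⟩

theorem exists_forall_approx_on_line {i j : ℝ} (hi : 0 < i) (hj : 0 < j) (hij : i + j = 1)
    (a b x : ℝ) {c : ℝ} (hc : 0 < c) :
    ∃ ε > 0, ∀ q : ℕ, 0 < q →
      (q : ℝ) ^ (1 / min i j) * max (distNearestInt (q * a)) (distNearestInt (q * b)) < ε →
      ∃ n : ℕ, 0 < n ∧
        max (distNearestInt (n * x) ^ (1 / i)) (distNearestInt (n * (a * x + b)) ^ (1 / j))
          ≤ c / n := by
  obtain ⟨T, hT1, hTj, hTi⟩ : ∃ T : ℝ, 1 ≤ T ∧ 3 / c ≤ T ^ j ∧ 3 * (|a| + 1) / c ≤ T ^ i :=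
    ((eventually_ge_atTop 1).and (((tendsto_rpow_atTop hj).eventually_ge_atTop _).and
      ((tendsto_rpow_atTop hi).eventually_ge_atTop _))).exists
  rw [div_le_iff₀ hc] at hTj hTi
  refine ⟨1 / (6 * T * (|x| + 1)), by positivity, fun q hq hqε => ?_⟩
  set σ := min i j
  set Δ := max (distNearestInt (q * a)) (distNearestInt (q * b))
  have hσ : 0 < σ := lt_min hi hj
  have hq1 : (1 : ℝ) ≤ q := by exact_mod_cast hq
  have hqσ : 1 ≤ (q : ℝ) ^ (1 / σ) := Real.one_le_rpow hq1 (by positivity)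
  set N := T * (q : ℝ) ^ (1 / σ)
  have hN1 : 1 ≤ N := one_le_mul_of_one_le_of_one_le hT1 hqσ
  have hN0 : 0 < N := by linarith
  set p := round (q * a)
  set r := round (q * b)
  have hθ : |(p - q * a) * x + (r - q * b)| ≤ Δ * (|x| + 1) := by
    have hΔa : |(q : ℝ) * a - p| ≤ Δ := le_max_left _ _
    have hΔb : |(q : ℝ) * b - r| ≤ Δ := le_max_right _ _
    calc |(p - q * a) * x + (r - q * b)| ≤ |(q : ℝ) * a - p| * |x| + |(q : ℝ) * b - r| := by
          refine (abs_add_le _ _).trans_eq ?_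
          rw [abs_mul, abs_sub_comm, abs_sub_comm (r : ℝ)]
      _ ≤ Δ * (|x| + 1) := by nlinarith [abs_nonneg x]
  have hp : |(p : ℝ)| ≤ (|a| + 1) * q := by
    have := abs_round_le (q * a)
    rw [abs_mul, Nat.abs_cast] at this
    nlinarith
  refine exists_nat_max_rpow_distNearestInt_le_of_relation hi hj hij (p := p) (q := q) (s := -r)
    (θ := (p - q * a) * x + (r - q * b))
    (Int.natCast_ne_zero.2 hq.ne') (inv_pos.2 hN0) (inv_le_one_of_one_le₀ hN1)
    (by push_cast; ring) ?_ ?_ ?_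
  · rw [← one_div, le_div_iff₀ hN0]
    rw [lt_div_iff₀ (by positivity)] at hqε
    calc 6 * |(p - q * a) * x + (r - q * b)| * N ≤ 6 * (Δ * (|x| + 1)) * N := by gcongr
      _ = (q : ℝ) ^ (1 / σ) * Δ * (6 * T * (|x| + 1)) := by ring
      _ ≤ 1 := hqε.le
  · rw [Int.cast_natCast, Nat.abs_cast, Real.inv_rpow hN0.le, ← div_eq_mul_inv,
      div_le_iff₀ (by positivity)]
    calc 3 * (q : ℝ) ≤ c * T ^ j * q := by nlinarith
      _ ≤ c * N ^ j := by
          rw [mul_assoc]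
          gcongr
          exact rpow_mul_le_mul_rpow_one_div_rpow (by linarith) hq1 hσ (min_le_right _ _)
  · rw [Real.inv_rpow hN0.le, ← div_eq_mul_inv, div_le_iff₀ (by positivity)]
    calc 3 * |(p : ℝ)| ≤ c * T ^ i * q := by nlinarith
      _ ≤ c * N ^ i := by
          rw [mul_assoc]
          gcongr
          exact rpow_mul_le_mul_rpow_one_div_rpow (by linarith) hq1 hσ (min_le_left _ _)

theorem stmt7_general (i j a b : ℝ)
    (hi0 : 0 < i) (hj0 : 0 < j) (hij : i + j = 1)
    (hdio : Filter.atTop.liminf (fun q : ℕ =>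
        ENNReal.ofReal ((q : ℝ) ^ (1 / min i j) *
          max (distNearestInt ((q : ℝ) * a)) (distNearestInt ((q : ℝ) * b)))) = 0) :
    badPair i j (0, 0) ∩ {p : ℝ × ℝ | ∃ x : ℝ, p = (x, a * x + b)} = ∅ := by
  rw [eq_empty_iff_forall_notMem]
  rintro _ ⟨⟨c, hc, hbad⟩, x, rfl⟩
  obtain ⟨ε, hε, happrox⟩ := exists_forall_approx_on_line hi0 hj0 hij a b x hc
  obtain ⟨q, hq, hqε⟩ := exists_pos_lt_of_liminf_ofReal_eq_zero hdio hε
  obtain ⟨n, hn, hle⟩ := happrox q hq hqε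
  exact (hbad n hn).not_ge (by simpa using hle)

theorem stmt7 (i j a b : ℝ)
    (hi0 : 0 < i) (hi1 : i < 1) (hj0 : 0 < j) (hj1 : j < 1) (hij : i + j = 1)
    (hdio : Filter.atTop.liminf (fun q : ℕ =>
        ENNReal.ofReal ((q : ℝ) ^ (1 / min i j) *
          max (distNearestInt ((q : ℝ) * a)) (distNearestInt ((q : ℝ) * b)))) = 0) :
    badPair i j (0, 0) ∩ {p : ℝ × ℝ | ∃ x : ℝ, p = (x, a * x + b)} = ∅ :=
  stmt7_general i j a b hi0 hj0 hij hdio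
end

section
/- Let i and j be real numbers with 0 < i, j < 1 and i + j = 1, and let b ∈ ℝ. If liminf_{q→∞} q^{1/j} · ‖qb‖ = 0, where the liminf is over positive integers q, then there is no x ∈ ℝ with (x, b) ∈ Bad(i,j); that is, Bad(i,j) ∩ {(x, b) : x ∈ ℝ} = ∅. -/
open Filter Set

lemma dni_nonneg (t : ℝ) : 0 ≤ distNearestInt t := abs_nonneg _

lemma dni_le_int (t : ℝ) (m : ℤ) : distNearestInt t ≤ |t - m| := round_le t m

lemma dni_nat_mul (k : ℕ) (t : ℝ) :
    distNearestInt ((k : ℝ) * t) ≤ (k : ℝ) * distNearestInt t := by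
  calc distNearestInt ((k : ℝ) * t) ≤ |(k : ℝ) * t - ((k * round t : ℤ) : ℝ)| :=
        dni_le_int _ _
    _ = (k : ℝ) * |t - round t| := by
        push_cast
        rw [← mul_sub, abs_mul, abs_of_nonneg (by positivity : (0:ℝ) ≤ (k:ℝ))]
    _ = (k : ℝ) * distNearestInt t := rfl

theorem stmt8 (i j b : ℝ)
    (hi0 : 0 < i) (hi1 : i < 1) (hj0 : 0 < j) (hj1 : j < 1) (hij : i + j = 1)
    (hdio : Filter.atTop.liminf (fun q : ℕ =>
        ENNReal.ofReal ((q : ℝ) ^ (1 / j) * distNearestInt ((q : ℝ) * b))) = 0) :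
    badPair i j (0, 0) ∩ {p : ℝ × ℝ | ∃ x : ℝ, p = (x, b)} = ∅ := by
  ext p
  simp only [mem_inter_iff, mem_empty_iff_false, iff_false, mem_setOf_eq, badPair]
  rintro ⟨⟨c, hc, hbad⟩, x, rfl⟩
  simp only [sub_zero] at hbad
  set ε : ℝ := c ^ (1/j) / 4 with hε_def
  have hε : 0 < ε := by positivity
  -- extract a good q from the liminf condition
  have hfreq : ∃ᶠ q : ℕ in atTop,
      ENNReal.ofReal ((q : ℝ) ^ (1 / j) * distNearestInt ((q : ℝ) * b)) <
        ENNReal.ofReal ε := by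
    by_contra h
    rw [not_frequently] at h
    have hle : ENNReal.ofReal ε ≤ atTop.liminf (fun q : ℕ =>
        ENNReal.ofReal ((q : ℝ) ^ (1 / j) * distNearestInt ((q : ℝ) * b))) := by
      apply Filter.le_liminf_of_le
      · exact Filter.isCobounded_ge_of_top
      · filter_upwards [h] with q hq
        exact not_lt.mp hq
    rw [hdio] at hle
    simp only [nonpos_iff_eq_zero, ENNReal.ofReal_eq_zero] at hle
    linarith
  obtain ⟨q, hq_small, hq_ge⟩ :=
    (hfreq.and_eventually (eventually_ge_atTop (max 1 (⌈c⌉₊ + 1)))).exists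
  have hq1 : 1 ≤ q := le_trans (le_max_left _ _) hq_ge
  have hq0 : 0 < (q : ℝ) := by exact_mod_cast hq1
  have hqc : c ≤ (q : ℝ) := by
    have : (⌈c⌉₊ : ℝ) ≤ (q : ℝ) := by
      exact_mod_cast le_trans (le_trans (Nat.le_succ _) (le_max_right 1 _)) hq_ge
    exact le_trans (Nat.le_ceil c) this
  have hqb : (q : ℝ) ^ (1 / j) * distNearestInt ((q : ℝ) * b) < ε :=
    (ENNReal.ofReal_lt_ofReal_iff hε).mp hq_small
  -- set up N
  set N : ℕ := ⌈((q : ℝ) / c) ^ (i / j)⌉₊ with hN_def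
  have hqc_pos : 0 < (q : ℝ) / c := div_pos hq0 hc
  have hqc1 : 1 ≤ (q : ℝ) / c := (one_le_div hc).mpr hqc
  have hbase1 : 1 ≤ ((q : ℝ) / c) ^ (i / j) :=
    Real.one_le_rpow hqc1 (by positivity)
  have hN1 : 1 ≤ N := Nat.one_le_ceil_iff.mpr (by positivity)
  have hNr : ((q : ℝ) / c) ^ (i / j) ≤ (N : ℝ) := Nat.le_ceil _
  have hNr_pos : 0 < (N : ℝ) := by exact_mod_cast hN1
  have hNub : (N : ℝ) ≤ 2 * ((q : ℝ) / c) ^ (i / j) := by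
    have := Nat.ceil_lt_add_one (le_of_lt (by positivity : (0:ℝ) < ((q : ℝ) / c) ^ (i / j)))
    linarith
  -- Dirichlet
  obtain ⟨m, k, hk0, hkN, hdir⟩ := Real.exists_int_int_abs_mul_sub_le ((q : ℝ) * x) hN1
  set K : ℕ := k.toNat with hK_def
  have hKk : (K : ℝ) = (k : ℝ) := by
    rw [hK_def]; exact_mod_cast Int.toNat_of_nonneg hk0.le
  have hK1 : 1 ≤ K := by omega
  set Q : ℕ := K * q with hQ_def
  have hQ0 : 0 < Q := Nat.mul_pos hK1 hq1
  have hQr : ((Q : ℕ) : ℝ) = (K : ℝ) * q := Nat.cast_mul K q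
  have hQpos : 0 < ((Q : ℕ) : ℝ) := by exact_mod_cast hQ0
  have hKN : (K : ℝ) ≤ (N : ℝ) := by rw [hKk]; exact_mod_cast hkN
  have hQleNq : ((Q : ℕ) : ℝ) ≤ (N : ℝ) * q := by
    rw [hQr]; exact mul_le_mul_of_nonneg_right hKN hq0.le
  have hcQ : c / ((N : ℝ) * q) ≤ c / ((Q : ℕ) : ℝ) := by gcongr
  -- bound on the x-part
  have hx1 : distNearestInt (((Q : ℕ) : ℝ) * x) ≤ 1 / ((N : ℝ) + 1) := by
    have hrw : ((Q : ℕ) : ℝ) * x = (k : ℝ) * ((q : ℝ) * x) := by rw [hQr, hKk]; ring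
    rw [hrw]
    exact le_trans (dni_le_int _ m) hdir
  -- key rpow inequality for the x-part
  have hkey1 : ((N : ℝ) * q) ^ i ≤ (N : ℝ) * c ^ i := by
    have h2 : ((q : ℝ) / c) ^ i ≤ (N : ℝ) ^ j := by
      calc ((q : ℝ) / c) ^ i = (((q : ℝ) / c) ^ (i / j)) ^ j := by
            rw [← Real.rpow_mul hqc_pos.le]; congr 1; field_simp
        _ ≤ (N : ℝ) ^ j := Real.rpow_le_rpow (by positivity) hNr hj0.le
    have h3 : (q : ℝ) ^ i / c ^ i ≤ (N : ℝ) ^ j := by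
      rwa [Real.div_rpow hq0.le hc.le i] at h2
    rw [div_le_iff₀ (by positivity)] at h3
    calc ((N : ℝ) * q) ^ i = (N : ℝ) ^ i * (q : ℝ) ^ i :=
          Real.mul_rpow hNr_pos.le hq0.le
      _ ≤ (N : ℝ) ^ i * ((N : ℝ) ^ j * c ^ i) := by
          exact mul_le_mul_of_nonneg_left h3 (by positivity)
      _ = (N : ℝ) * c ^ i := by
          rw [← mul_assoc, ← Real.rpow_add hNr_pos, hij, Real.rpow_one]
  have hclaim1 : 1 / ((N : ℝ) + 1) ≤ (c / ((Q : ℕ) : ℝ)) ^ i := by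
    calc 1 / ((N : ℝ) + 1) ≤ c ^ i / ((N : ℝ) * q) ^ i := by
          rw [div_le_div_iff₀ (by positivity) (by positivity)]
          nlinarith [Real.rpow_pos_of_pos hc i, hkey1]
      _ = (c / ((N : ℝ) * q)) ^ i := (Real.div_rpow hc.le (by positivity : (0:ℝ) ≤ (N : ℝ) * q) i).symm
      _ ≤ (c / ((Q : ℕ) : ℝ)) ^ i := Real.rpow_le_rpow (by positivity) hcQ hi0.le
  have hxe : distNearestInt (((Q : ℕ) : ℝ) * x) ^ (1 / i) ≤ c / ((Q : ℕ) : ℝ) := by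
    have h := Real.rpow_le_rpow (dni_nonneg _) (le_trans hx1 hclaim1)
      (by positivity : (0:ℝ) ≤ 1 / i)
    rwa [← Real.rpow_mul (le_of_lt (div_pos hc hQpos)), mul_one_div, div_self hi0.ne',
      Real.rpow_one] at h
  -- bound on the b-part
  have hb1 : distNearestInt (((Q : ℕ) : ℝ) * b) ≤ (N : ℝ) * distNearestInt ((q : ℝ) * b) := by
    have hrw : ((Q : ℕ) : ℝ) * b = (K : ℝ) * ((q : ℝ) * b) := by rw [hQr]; ring
    rw [hrw]
    exact le_trans (dni_nat_mul K _)
      (mul_le_mul_of_nonneg_right hKN (dni_nonneg _))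
  have hqpow : 0 < (q : ℝ) ^ (1 / j) := Real.rpow_pos_of_pos hq0 _
  have hqb2 : distNearestInt ((q : ℝ) * b) < ε / (q : ℝ) ^ (1 / j) := by
    rw [lt_div_iff₀ hqpow, mul_comm]; exact hqb
  -- exponent bookkeeping
  set t : ℝ := i * (1 + j) / j with ht_def
  have ht0 : 0 ≤ t := by positivity
  have hexp : j + t = 1 / j := by
    rw [ht_def]; field_simp; linear_combination (1 + j) * hij
  have h24 : (2 : ℝ) ^ ((1 : ℝ) + j) ≤ 4 := by
    calc (2 : ℝ) ^ ((1 : ℝ) + j) ≤ (2 : ℝ) ^ ((1 : ℝ) + 1) :=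
          Real.rpow_le_rpow_of_exponent_le one_le_two (by linarith)
      _ = 4 := by
          rw [Real.rpow_add (by norm_num), Real.rpow_one]; norm_num
  have hN1j : (N : ℝ) ^ ((1 : ℝ) + j) ≤ 4 * ((q : ℝ) / c) ^ t := by
    calc (N : ℝ) ^ ((1 : ℝ) + j) ≤ (2 * ((q : ℝ) / c) ^ (i / j)) ^ ((1 : ℝ) + j) :=
          Real.rpow_le_rpow hNr_pos.le hNub (by linarith)
      _ = (2 : ℝ) ^ ((1 : ℝ) + j) * (((q : ℝ) / c) ^ (i / j)) ^ ((1 : ℝ) + j) :=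
          Real.mul_rpow (by norm_num) (by positivity)
      _ = (2 : ℝ) ^ ((1 : ℝ) + j) * ((q : ℝ) / c) ^ t := by
          rw [← Real.rpow_mul hqc_pos.le]; congr 2; rw [ht_def]; field_simp
      _ ≤ 4 * ((q : ℝ) / c) ^ t := by
          exact mul_le_mul_of_nonneg_right h24 (by positivity)
  have hct : 0 < c ^ t := Real.rpow_pos_of_pos hc t
  have hqt : 0 < (q : ℝ) ^ t := Real.rpow_pos_of_pos hq0 t
  have hqj : 0 < (q : ℝ) ^ j := Real.rpow_pos_of_pos hq0 j
  have hNj : 0 < (N : ℝ) ^ j := Real.rpow_pos_of_pos hNr_pos j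
  have hsplit_q : (q : ℝ) ^ (1 / j) = (q : ℝ) ^ j * (q : ℝ) ^ t := by
    rw [← Real.rpow_add hq0, hexp]
  have hsplit_N : (N : ℝ) * (N : ℝ) ^ j = (N : ℝ) ^ ((1 : ℝ) + j) := by
    rw [Real.rpow_add hNr_pos, Real.rpow_one]
  have hcj : c ^ (1 / j) = c ^ j * c ^ t := by rw [← Real.rpow_add hc, hexp]
  have hdivt : ((q : ℝ) / c) ^ t = (q : ℝ) ^ t / c ^ t := Real.div_rpow hq0.le hc.le t
  have hclaim2 : (N : ℝ) * (ε / (q : ℝ) ^ (1 / j)) ≤ (c / ((Q : ℕ) : ℝ)) ^ j := by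
    have h1 : (N : ℝ) * (N : ℝ) ^ j ≤ 4 * (q : ℝ) ^ t / c ^ t := by
      rw [hsplit_N]; rw [hdivt] at hN1j
      calc (N : ℝ) ^ ((1:ℝ) + j) ≤ 4 * ((q : ℝ) ^ t / c ^ t) := hN1j
        _ = 4 * (q : ℝ) ^ t / c ^ t := by ring
    have h2 : ε * (4 * (q : ℝ) ^ t / c ^ t) = c ^ j * (q : ℝ) ^ t := by
      rw [hε_def, hcj]; field_simp
    have hmain : (N : ℝ) * (ε / (q : ℝ) ^ (1 / j)) ≤ c ^ j / ((N : ℝ) ^ j * (q : ℝ) ^ j) := by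
      rw [mul_div_assoc', div_le_div_iff₀ (by positivity) (by positivity), hsplit_q]
      calc (N : ℝ) * ε * ((N : ℝ) ^ j * (q : ℝ) ^ j)
          = ε * ((N : ℝ) * (N : ℝ) ^ j) * (q : ℝ) ^ j := by ring
        _ ≤ ε * (4 * (q : ℝ) ^ t / c ^ t) * (q : ℝ) ^ j := by
            exact mul_le_mul_of_nonneg_right
              (mul_le_mul_of_nonneg_left h1 hε.le) hqj.le
        _ = c ^ j * (q : ℝ) ^ t * (q : ℝ) ^ j := by rw [h2]
        _ = c ^ j * ((q : ℝ) ^ j * (q : ℝ) ^ t) := by ring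
    calc (N : ℝ) * (ε / (q : ℝ) ^ (1 / j)) ≤ c ^ j / ((N : ℝ) ^ j * (q : ℝ) ^ j) := hmain
      _ = (c / ((N : ℝ) * q)) ^ j := by
          rw [Real.div_rpow hc.le (by positivity : (0:ℝ) ≤ (N : ℝ) * q) j,
            Real.mul_rpow hNr_pos.le hq0.le]
      _ ≤ (c / ((Q : ℕ) : ℝ)) ^ j := Real.rpow_le_rpow (by positivity) hcQ hj0.le
  have hbe : distNearestInt (((Q : ℕ) : ℝ) * b) ^ (1 / j) ≤ c / ((Q : ℕ) : ℝ) := by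
    have hle : distNearestInt (((Q : ℕ) : ℝ) * b) ≤ (c / ((Q : ℕ) : ℝ)) ^ j := by
      calc distNearestInt (((Q : ℕ) : ℝ) * b) ≤ (N : ℝ) * distNearestInt ((q : ℝ) * b) := hb1
        _ ≤ (N : ℝ) * (ε / (q : ℝ) ^ (1 / j)) :=
            mul_le_mul_of_nonneg_left hqb2.le hNr_pos.le
        _ ≤ (c / ((Q : ℕ) : ℝ)) ^ j := hclaim2
    have h := Real.rpow_le_rpow (dni_nonneg _) hle (by positivity : (0:ℝ) ≤ 1 / j)
    rwa [← Real.rpow_mul (le_of_lt (div_pos hc hQpos)), mul_one_div, div_self hj0.ne',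
      Real.rpow_one] at h
  have hcontra := hbad Q hQ0
  exact absurd hcontra (not_lt.mpr (max_le hxe hbe))
end

section
/- Let i and j be real numbers with 0 < i, j < 1 and i + j = 1. For any integers p, r and any positive integer q, there exist integers A, B, C with gcd(A, B, C) = 1 and (A, B) ≠ (0, 0) such that A·p + B·r + C·q = 0, |A| ≤ q^i and |B| ≤ q^j. -/
/-!
Pigeonhole over the `(a + 1)(b + 1) > q` pairs `(x, y)` with `0 ≤ x ≤ a`, `0 ≤ y ≤ b`, where
`a = ⌊q ^ i⌋` and `b = ⌊q ^ j⌋`: two of them give the same residue of `x p + y r` modulo `q`, and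
their difference `(A, B)` is a small nonzero solution of `q ∣ A p + B r`. Dividing the resulting
triple `(A, B, C)` by its gcd makes it primitive without enlarging `|A|` or `|B|`.
-/

lemma mul_lt_floor_add_one_mul_floor_add_one {x y : ℝ} (hx : 0 ≤ x) (hy : 0 ≤ y) :
    x * y < ((⌊x⌋₊ + 1) * (⌊y⌋₊ + 1) : ℕ) := by
  push_cast
  exact mul_lt_mul'' (Nat.lt_floor_add_one x) (Nat.lt_floor_add_one y) hx hy

lemma Int.exists_abs_le_dvd_mul_add_mul (p r : ℤ) {q a b : ℕ} [NeZero q]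
    (h : q < (a + 1) * (b + 1)) :
    ∃ A B : ℤ, (A, B) ≠ (0, 0) ∧ |A| ≤ a ∧ |B| ≤ b ∧ (q : ℤ) ∣ A * p + B * r := by
  let f : Fin (a + 1) × Fin (b + 1) → ZMod q := fun x => ((x.1 : ℤ) * p + (x.2 : ℤ) * r : ℤ)
  have hcard : Fintype.card (ZMod q) < Fintype.card (Fin (a + 1) × Fin (b + 1)) := by
    simpa only [ZMod.card, Fintype.card_prod, Fintype.card_fin] using h
  obtain ⟨u, v, huv, hf⟩ := Fintype.exists_ne_map_eq_of_card_lt f hcard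
  refine ⟨(u.1 : ℤ) - v.1, (u.2 : ℤ) - v.2, ?_, ?_, ?_, ?_⟩
  · intro h0
    simp only [Prod.mk.injEq, sub_eq_zero, Nat.cast_inj, Fin.val_inj] at h0
    exact huv (Prod.ext h0.1 h0.2)
  · have := u.1.isLt; have := v.1.isLt; rw [abs_le]; omega
  · have := u.2.isLt; have := v.2.isLt; rw [abs_le]; omega
  · rw [← ZMod.intCast_zmod_eq_zero_iff_dvd]
    simp only [f] at hf
    push_cast at hf ⊢
    linear_combination hf

lemma Int.exists_mul_gcd_eq_one (A₀ B₀ C₀ : ℤ) (h : ¬(A₀ = 0 ∧ B₀ = 0 ∧ C₀ = 0)) :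
    ∃ g A B C : ℤ, 0 < g ∧ A₀ = g * A ∧ B₀ = g * B ∧ C₀ = g * C ∧
      Int.gcd A (Int.gcd B C : ℤ) = 1 := by
  set g := Int.gcd A₀ (Int.gcd B₀ C₀ : ℤ)
  have hg : 0 < g := by
    simp only [g, Int.gcd_pos_iff, ne_eq, Nat.cast_eq_zero, Int.gcd_eq_zero_iff]
    tauto
  obtain ⟨A, hA⟩ : (g : ℤ) ∣ A₀ := Int.gcd_dvd_left _ _
  obtain ⟨B, hB⟩ : (g : ℤ) ∣ B₀ := (Int.gcd_dvd_right _ _).trans (Int.gcd_dvd_left _ _)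
  obtain ⟨C, hC⟩ : (g : ℤ) ∣ C₀ := (Int.gcd_dvd_right _ _).trans (Int.gcd_dvd_right _ _)
  refine ⟨g, A, B, C, by exact_mod_cast hg, hA, hB, hC, ?_⟩
  have hg' : g * Int.gcd A (Int.gcd B C : ℤ) = g * 1 :=
    calc g * Int.gcd A (Int.gcd B C : ℤ) = Int.gcd (g * A) (Int.gcd (g * B) (g * C) : ℤ) := by
          rw [Int.gcd_mul_left, Nat.cast_mul, Int.natAbs_natCast, Int.gcd_mul_left,
            Int.natAbs_natCast]
      _ = g * 1 := by rw [← hA, ← hB, ← hC, mul_one]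
  exact Nat.eq_of_mul_eq_mul_left hg hg'

theorem stmt9_general (i j : ℝ)
    (hij : i + j = 1)
    (p r : ℤ) (q : ℕ) (hq : 0 < q) :
    ∃ A B C : ℤ, Int.gcd A (Int.gcd B C : ℤ) = 1 ∧ (A, B) ≠ (0, 0) ∧
      A * p + B * r + C * q = 0 ∧
      (|A| : ℝ) ≤ (q : ℝ) ^ i ∧ (|B| : ℝ) ≤ (q : ℝ) ^ j := by
  have : NeZero q := ⟨hq.ne'⟩
  have hq' : (0 : ℝ) < q := by exact_mod_cast hq
  have hqi := Real.rpow_nonneg hq'.le i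
  have hqj := Real.rpow_nonneg hq'.le j
  have hcard : q < (⌊(q : ℝ) ^ i⌋₊ + 1) * (⌊(q : ℝ) ^ j⌋₊ + 1) := by
    have := mul_lt_floor_add_one_mul_floor_add_one hqi hqj
    rwa [← Real.rpow_add hq', hij, Real.rpow_one, Nat.cast_lt] at this
  obtain ⟨A₀, B₀, hne, hA₀, hB₀, k, hk⟩ := Int.exists_abs_le_dvd_mul_add_mul p r hcard
  obtain ⟨g, A, B, C, hg, rfl, rfl, hC, hgcd⟩ :=
    Int.exists_mul_gcd_eq_one A₀ B₀ (-k) (fun h => hne (by simp [h.1, h.2.1]))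
  have habs {X : ℤ} {x : ℕ} (hX : |g * X| ≤ x) : (|X| : ℝ) ≤ x := by
    rw [abs_mul, abs_of_pos hg] at hX
    exact_mod_cast (le_mul_of_one_le_left (abs_nonneg X) hg).trans hX
  refine ⟨A, B, C, hgcd, fun h => hne (by simp_all), ?_,
    (habs hA₀).trans (Nat.floor_le hqi), (habs hB₀).trans (Nat.floor_le hqj)⟩
  have : g * (A * p + B * r + C * q) = 0 := by linear_combination hk - q * hC
  exact (mul_eq_zero.mp this).resolve_left hg.ne'

theorem stmt9 (i j : ℝ)
    (hi0 : 0 < i) (hi1 : i < 1) (hj0 : 0 < j) (hj1 : j < 1) (hij : i + j = 1)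
    (p r : ℤ) (q : ℕ) (hq : 0 < q) :
    ∃ A B C : ℤ, Int.gcd A (Int.gcd B C : ℤ) = 1 ∧ (A, B) ≠ (0, 0) ∧
      A * p + B * r + C * q = 0 ∧
      (|A| : ℝ) ≤ (q : ℝ) ^ i ∧ (|B| : ℝ) ≤ (q : ℝ) ^ j :=
  stmt9_general i j hij p r q hq
end

section
/- Let N and m be integers with 1 ≤ m ≤ N, and let T be the N-regular rooted tree. Let S be a subtree of T. Suppose that for every m-regular subtree R of T, the intersection S ∩ R is infinite. Then there exists a subset S′ ⊆ S which is itself a subtree of T and is (N − m + 1)-regular. -/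
/-- A subtree of the `N`-regular rooted tree (modelled as the set of all finite
words over `Fin N`): a set of words containing the empty word and closed under
taking prefixes. -/
def IsSubtree {N : ℕ} (S : Set (List (Fin N))) : Prop :=
  [] ∈ S ∧ ∀ w ∈ S, ∀ v : List (Fin N), v <+: w → v ∈ S

/-- A subtree is `k`-regular if every word in it has exactly `k` successors
(one-letter extensions) in it. -/
def IsRegularSubtree {N : ℕ} (k : ℕ) (S : Set (List (Fin N))) : Prop :=
  IsSubtree S ∧ ∀ w ∈ S, {a : Fin N | w ++ [a] ∈ S}.ncard = k

/-!
Call a set `S` of words `m`-large if it meets every `m`-regular subtree in an infinite set, and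
call a word `w` large if its residual `{u | w ++ u ∈ S}` is `m`-large; the hypothesis says the root
is large. A large word has at least `N - m + 1` large children: otherwise `m` of its children are
not large, each witnessed by an `m`-regular subtree meeting the corresponding residual in a finite
set, and grafting these `m` witnesses below a common root gives an `m`-regular subtree meeting the
residual of `w` in a finite set. Choosing `N - m + 1` large children at every large word therefore
grows an `(N - m + 1)`-regular subtree, and it lies in `S` because large words lie in `S`.
-/

open Set

variable {N m : ℕ}

def IsLarge (m : ℕ) (S : Set (List (Fin N))) : Prop :=
  ∀ R : Set (List (Fin N)), IsRegularSubtree m R → (S ∩ R).Infinite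

theorem exists_isRegularSubtree (hmN : m ≤ N) :
    ∃ R : Set (List (Fin N)), IsRegularSubtree m R := by
  set L : Set (List (Fin N)) := {w | ∀ x ∈ w, (x : ℕ) < m}
  refine ⟨L, ⟨fun x hx => absurd hx List.not_mem_nil, fun w hw v hv x hx => hw x (hv.subset hx)⟩,
    fun w hw => ?_⟩
  have hletters :
      {a : Fin N | w ++ [a] ∈ L} = ↑(Finset.univ.filter fun a : Fin N => (a : ℕ) < m) := by
    ext a
    simp only [L, mem_ofPred_eq, List.forall_mem_append, List.forall_mem_singleton,
      Finset.coe_filter, Finset.mem_univ, true_and]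
    exact and_iff_right hw
  rw [hletters, ncard_coe_finset, Fin.card_filter_val_lt, min_eq_right hmN]

theorem IsSubtree.mem_of_isLarge_preimage {S : Set (List (Fin N))} {w : List (Fin N)}
    (hS : IsSubtree S) (hmN : m ≤ N) (hw : IsLarge m ((w ++ ·) ⁻¹' S)) : w ∈ S := by
  obtain ⟨R, hR⟩ := exists_isRegularSubtree hmN
  obtain ⟨u, hu, -⟩ := (hw R hR).nonempty
  exact hS.2 _ hu w (List.prefix_append w u)

def graft {α : Type*} (B : Set α) (R : α → Set (List α)) : Set (List α)
  | [] => True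
  | a :: u => a ∈ B ∧ u ∈ R a

theorem isRegularSubtree_graft {B : Set (Fin N)} {R : Fin N → Set (List (Fin N))}
    (hB : B.ncard = m) (hR : ∀ a ∈ B, IsRegularSubtree m (R a)) :
    IsRegularSubtree m (graft B R) := by
  refine ⟨⟨trivial, ?_⟩, ?_⟩
  · rintro (_ | ⟨a, u⟩) hw v hv
    · rw [List.prefix_nil.1 hv]
      trivial
    · obtain rfl | ⟨t, rfl, ht⟩ := List.prefix_cons_iff.1 hv
      · trivial
      · exact ⟨hw.1, (hR a hw.1).1.2 u hw.2 t ht⟩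
  · rintro (_ | ⟨a, u⟩) hw
    · rw [← hB]
      congr 1
      ext a
      exact and_iff_left_of_imp fun ha => (hR a ha).1.1
    · show {b | a ∈ B ∧ u ++ [b] ∈ R a}.ncard = m
      simp only [hw.1, true_and]
      exact (hR a hw.1).2 u hw.2

theorem IsLarge.le_ncard_isLarge_preimage_cons {S : Set (List (Fin N))} (hS : IsLarge m S)
    (hmN : m ≤ N) : N - m + 1 ≤ {a | IsLarge m ((a :: ·) ⁻¹' S)}.ncard := by
  set G := {a | IsLarge m ((a :: ·) ⁻¹' S)}
  by_contra! hG
  have hbad : m ≤ Gᶜ.ncard := by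
    have := ncard_add_ncard_compl G
    rw [Nat.card_eq_fintype_card, Fintype.card_fin] at this
    omega
  obtain ⟨B, hBG, hB⟩ := exists_subset_card_eq hbad
  have hwitness : ∀ a ∈ Gᶜ, ∃ R, IsRegularSubtree m R ∧ ((a :: ·) ⁻¹' S ∩ R).Finite := by
    intro a ha
    simpa [G, IsLarge] using ha
  choose! R hR hRS using hwitness
  refine hS (graft B R) (isRegularSubtree_graft hB fun a ha => hR a (hBG ha)) ?_
  refine (((toFinite B).biUnion fun a ha => (hRS a (hBG ha)).image (a :: ·)).insert []).subset ?_
  rintro (_ | ⟨a, u⟩) ⟨huS, hu⟩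
  · exact mem_insert _ _
  · exact mem_insert_of_mem _ (mem_biUnion hu.1 ⟨u, ⟨huS, hu.2⟩, rfl⟩)

inductive ChoiceTree {α : Type*} (pick : List α → Set α) : List α → Prop
  | nil : ChoiceTree pick []
  | snoc {w : List α} {a : α} : ChoiceTree pick w → a ∈ pick w → ChoiceTree pick (w ++ [a])

section ChoiceTree

variable {α : Type*} {pick : List α → Set α} {v w : List α} {a : α}

theorem choiceTree_snoc_iff : ChoiceTree pick (w ++ [a]) ↔ ChoiceTree pick w ∧ a ∈ pick w := by
  refine ⟨fun h => ?_, fun h => .snoc h.1 h.2⟩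
  generalize hv : w ++ [a] = v at h
  cases h with
  | nil => simp at hv
  | snoc hu hb =>
    obtain ⟨rfl, ⟨⟩⟩ := List.append_inj' hv rfl
    exact ⟨hu, hb⟩

theorem ChoiceTree.of_prefix (hw : ChoiceTree pick w) (hv : v <+: w) : ChoiceTree pick v := by
  induction hw with
  | nil =>
    rw [List.prefix_nil.1 hv]
    exact .nil
  | snoc hu hb ih =>
    obtain rfl | hv := List.prefix_concat_iff.1 hv
    exacts [.snoc hu hb, ih hv]

end ChoiceTree

theorem exists_isRegularSubtree_subset {G : Set (List (Fin N))} {k : ℕ} (h0 : [] ∈ G)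
    (hG : ∀ w ∈ G, k ≤ {a | w ++ [a] ∈ G}.ncard) : ∃ T ⊆ G, IsRegularSubtree k T := by
  choose! pick hpickG hpick using fun w (hw : w ∈ G) => exists_subset_card_eq (hG w hw)
  have hsub : {w | ChoiceTree pick w} ⊆ G := by
    intro w hw
    induction hw with
    | nil => exact h0
    | snoc _ ha ih => exact hpickG _ ih ha
  refine ⟨_, hsub, ⟨⟨.nil, fun w hw v hv => ChoiceTree.of_prefix hw hv⟩, fun w hw => ?_⟩⟩
  simp only [mem_ofPred_eq, choiceTree_snoc_iff, show ChoiceTree pick w from hw, true_and,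
    ofPred_mem_eq]
  exact hpick w (hsub hw)

theorem stmt10_general (N m : ℕ) (hmN : m ≤ N)
    (S : Set (List (Fin N))) (hS : IsSubtree S)
    (h : ∀ R : Set (List (Fin N)), IsRegularSubtree m R → (S ∩ R).Infinite) :
    ∃ S' ⊆ S, IsRegularSubtree (N - m + 1) S' := by
  have hroot : [] ∈ {w | IsLarge m ((w ++ ·) ⁻¹' S)} := by simpa [IsLarge] using h
  have hchildren : ∀ w ∈ {w | IsLarge m ((w ++ ·) ⁻¹' S)},
      N - m + 1 ≤ {a | w ++ [a] ∈ {w | IsLarge m ((w ++ ·) ⁻¹' S)}}.ncard := by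
    intro w hw
    simpa [Set.preimage] using IsLarge.le_ncard_isLarge_preimage_cons hw hmN
  obtain ⟨T, hTG, hT⟩ := exists_isRegularSubtree_subset hroot hchildren
  exact ⟨T, fun w hw => hS.mem_of_isLarge_preimage hmN (hTG hw), hT⟩

theorem stmt10 (N m : ℕ) (hm1 : 1 ≤ m) (hmN : m ≤ N)
    (S : Set (List (Fin N))) (hS : IsSubtree S)
    (h : ∀ R : Set (List (Fin N)), IsRegularSubtree m R → (S ∩ R).Infinite) :
    ∃ S' ⊆ S, IsRegularSubtree (N - m + 1) S' :=
  stmt10_general N m hmN S hS h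
end

section
/- Let D and N be positive integers with D dividing N, let T be the N-regular rooted tree, and let γ be a regular D-coloring of T, i.e., a map from T to a set of D colors such that for every vertex τ of T and every color i, exactly N/D of the N successors of τ have color i. Let S be a subtree of T. Suppose that for every subtree R ⊆ T of type (II) (meaning: for every τ ∈ R there is a color i(τ) such that the successors of τ lying in R are exactly all successors of τ of color i(τ)), the intersection S ∩ R is infinite. Then S contains a subtree of type (I), i.e., a subset S′ ⊆ S which is itself a subtree of T such that every vertex of S′ has, for each of the D colors, exactly one successor of that color lying in S′. -/
/-!
Call a word `w` *dense* if every type-(II) subtree rooted at `w` meets `S` in an infinite set.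
The root is dense by hypothesis. If `w` is dense, then for every colour `c` some successor of `w`
of colour `c` is dense: otherwise, grafting onto `w` one type-(II) subtree with finite trace on `S`
above each of the finitely many successors of colour `c` gives a type-(II) subtree rooted at `w`
with finite trace on `S`. A dense word lies in `S`, since a monochromatic cone above a word
outside `S` misses `S`. Choosing, from every dense word, one dense successor of each colour
produces the required subtree of type (I).
-/

lemma List.eq_of_append_singleton_prefix {α : Type*} {w u : List α} {a b : α}
    (ha : w ++ [a] <+: u) (hb : w ++ [b] <+: u) : a = b := by
  have ha' := List.prefix_iff_eq_take.mp ha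
  have hb' := List.prefix_iff_eq_take.mp hb
  simp only [List.length_append, List.length_singleton] at ha' hb'
  simpa using ha'.trans hb'.symm

lemma List.append_singleton_prefix_of_prefix_of_ne {α : Type*} {w v u : List α} {a : α}
    (hwv : w <+: v) (hne : v ≠ w) (hvu : v <+: u) (hau : w ++ [a] <+: u) : w ++ [a] <+: v := by
  obtain ⟨t, rfl⟩ := hwv
  cases t with
  | nil => simp at hne
  | cons b t =>
    have hbv : w ++ [b] <+: w ++ b :: t := (List.prefix_append_right_inj w).mpr (by simp)
    obtain rfl := List.eq_of_append_singleton_prefix hau (hbv.trans hvu)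
    exact hbv

section TypeII

variable {N : ℕ} {κ : Type*} (γ : List (Fin N) → κ)

def IsSubtreeAt (w : List (Fin N)) (R : Set (List (Fin N))) : Prop :=
  w ∈ R ∧ ∀ u ∈ R, w <+: u ∧ ∀ v, w <+: v → v <+: u → v ∈ R

def IsTypeII (R : Set (List (Fin N))) : Prop :=
  ∀ u ∈ R, ∃ c : κ, ∀ a : Fin N, u ++ [a] ∈ R ↔ γ (u ++ [a]) = c

def TypeIIDense (S : Set (List (Fin N))) (w : List (Fin N)) : Prop :=
  ∀ R, IsSubtreeAt w R → IsTypeII γ R → (S ∩ R).Infinite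

def monoCone (w : List (Fin N)) (c : κ) : Set (List (Fin N)) :=
  {u | w <+: u ∧ ∀ v a, w <+: v → v ++ [a] <+: u → γ (v ++ [a]) = c}

lemma IsSubtreeAt.isSubtree {R : Set (List (Fin N))} (hR : IsSubtreeAt [] R) : IsSubtree R :=
  ⟨hR.1, fun u hu v hv => (hR.2 u hu).2 v v.nil_prefix hv⟩

lemma isSubtreeAt_monoCone (w : List (Fin N)) (c : κ) : IsSubtreeAt w (monoCone γ w c) := by
  refine ⟨⟨List.prefix_refl w, fun v a hwv hva => ?_⟩, fun u hu => ⟨hu.1, fun v hwv hvu => ?_⟩⟩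
  · have := hva.length_le.trans hwv.length_le
    simp at this
  · exact ⟨hwv, fun v' a hv' hv'a => hu.2 v' a hv' (hv'a.trans hvu)⟩

lemma isTypeII_monoCone (w : List (Fin N)) (c : κ) : IsTypeII γ (monoCone γ w c) := by
  refine fun u hu => ⟨c, fun a => ⟨fun h => h.2 u a hu.1 (List.prefix_refl _), fun h => ?_⟩⟩
  refine ⟨hu.1.trans (List.prefix_append u [a]), fun v b hv hvb => ?_⟩
  rcases List.prefix_concat_iff.mp hvb with heq | hpre
  · rwa [heq]
  · exact hu.2 v b hv hpre

lemma TypeIIDense.mem {S : Set (List (Fin N))} (hS : IsSubtree S) {w : List (Fin N)}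
    (hw : TypeIIDense γ S w) : w ∈ S := by
  by_contra hwS
  apply hw _ (isSubtreeAt_monoCone γ w (γ w)) (isTypeII_monoCone γ w (γ w))
  convert Set.finite_empty
  exact Set.eq_empty_of_forall_notMem fun u hu => hwS (hS.2 u hu.1 w hu.2.1)

section Graft

variable {w : List (Fin N)} {A : Set (Fin N)} {F : A → Set (List (Fin N))}

lemma IsSubtreeAt.graft_index_eq (hF : ∀ i, IsSubtreeAt (w ++ [i.1]) (F i)) {i j : A}
    {u : List (Fin N)} (hu : u ∈ F j) (hiu : w ++ [i.1] <+: u) : j = i :=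
  Subtype.ext (List.eq_of_append_singleton_prefix ((hF j).2 u hu).1 hiu)

lemma IsSubtreeAt.graft (hF : ∀ i, IsSubtreeAt (w ++ [i.1]) (F i)) :
    IsSubtreeAt w (insert w (⋃ i, F i)) := by
  refine ⟨Set.mem_insert w _, fun u hu => ?_⟩
  rcases hu with rfl | hu
  · refine ⟨List.prefix_refl u, fun v hv hvu => ?_⟩
    rw [hvu.eq_of_length (le_antisymm hvu.length_le hv.length_le)]
    exact Set.mem_insert u _
  obtain ⟨i, hi⟩ := Set.mem_iUnion.mp hu
  have hiu := ((hF i).2 u hi).1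
  refine ⟨(List.prefix_append w [i.1]).trans hiu, fun v hwv hvu => ?_⟩
  by_cases hvw : v = w
  · exact hvw ▸ Set.mem_insert v _
  · have hiv := List.append_singleton_prefix_of_prefix_of_ne hwv hvw hvu hiu
    exact Or.inr (Set.mem_iUnion.mpr ⟨i, ((hF i).2 u hi).2 v hiv hvu⟩)

end Graft

lemma IsTypeII.graft {w : List (Fin N)} {c : κ} {F : {a | γ (w ++ [a]) = c} → Set (List (Fin N))}
    (hF : ∀ i, IsSubtreeAt (w ++ [i.1]) (F i)) (hFII : ∀ i, IsTypeII γ (F i)) :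
    IsTypeII γ (insert w (⋃ i, F i)) := by
  have hne : ∀ {u : List (Fin N)} {a : Fin N} (i : {a | γ (w ++ [a]) = c}),
      w ++ [i.1] <+: u → u ++ [a] ≠ w := fun _ hiu heq => by
    have hlen := congrArg List.length heq
    have hle := hiu.length_le
    simp only [List.length_append, List.length_singleton] at hlen hle
    omega
  intro u hu
  rcases hu with rfl | hu
  · refine ⟨c, fun a => ⟨fun ha => ?_, fun ha => Or.inr (Set.mem_iUnion.mpr ⟨⟨a, ha⟩, (hF _).1⟩)⟩⟩
    obtain ⟨i, hi⟩ := Set.mem_iUnion.mp (ha.resolve_left (by simp))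
    have hia := List.eq_of_append_singleton_prefix ((hF i).2 _ hi).1 (List.prefix_refl _)
    exact hia ▸ i.2
  obtain ⟨i, hi⟩ := Set.mem_iUnion.mp hu
  have hiu := ((hF i).2 u hi).1
  obtain ⟨c', hc'⟩ := hFII i u hi
  refine ⟨c', fun a => ⟨fun ha => ?_, fun ha => Or.inr (Set.mem_iUnion.mpr ⟨i, (hc' a).mpr ha⟩)⟩⟩
  obtain ⟨j, hj⟩ := Set.mem_iUnion.mp (ha.resolve_left (hne i hiu))
  obtain rfl := IsSubtreeAt.graft_index_eq hF hj (hiu.trans (List.prefix_append u [a]))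
  exact (hc' a).mp hj

lemma TypeIIDense.exists_succ {S : Set (List (Fin N))} {w : List (Fin N)}
    (hw : TypeIIDense γ S w) (c : κ) :
    ∃ a, γ (w ++ [a]) = c ∧ TypeIIDense γ S (w ++ [a]) := by
  by_contra! hbad
  have hwit : ∀ i : {a | γ (w ++ [a]) = c}, ∃ R, IsSubtreeAt (w ++ [i.1]) R ∧
      IsTypeII γ R ∧ (S ∩ R).Finite := fun i => by
    simpa [TypeIIDense, Set.not_infinite] using hbad i i.2
  choose F hFsub hFII hFfin using hwit
  apply hw _ (IsSubtreeAt.graft hFsub) (IsTypeII.graft γ hFsub hFII)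
  refine ((Set.finite_iUnion hFfin).insert w).subset ?_
  rw [← Set.inter_iUnion]
  exact fun u ⟨huS, hu⟩ => hu.imp_right fun hu => ⟨huS, hu⟩

end TypeII

theorem exists_typeI_subtree {N : ℕ} {κ : Type*} (γ : List (Fin N) → κ)
    (P : List (Fin N) → Prop) (hroot : P [])
    (hsucc : ∀ w, P w → ∀ c, ∃ a, γ (w ++ [a]) = c ∧ P (w ++ [a])) :
    ∃ T, IsSubtree T ∧ (∀ w ∈ T, P w) ∧
      ∀ w ∈ T, ∀ c, {a : Fin N | w ++ [a] ∈ T ∧ γ (w ++ [a]) = c}.ncard = 1 := by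
  choose f hfγ hfP using fun (w : {w // P w}) c => hsucc w.1 w.2 c
  set T : Set (List (Fin N)) :=
    {u | ∀ v a, v ++ [a] <+: u → ∃ hv : P v, f ⟨v, hv⟩ (γ (v ++ [a])) = a}
  have mem_snoc : ∀ w a, w ++ [a] ∈ T ↔ w ∈ T ∧ ∃ hw : P w, f ⟨w, hw⟩ (γ (w ++ [a])) = a := by
    refine fun w a => ⟨fun h => ⟨fun v b hvb => h v b (hvb.trans (List.prefix_append w [a])),
      h w a (List.prefix_refl _)⟩, fun ⟨hw, hwa⟩ v b hvb => ?_⟩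
    rcases List.prefix_concat_iff.mp hvb with heq | hpre
    · obtain ⟨rfl, hba⟩ := List.append_inj' heq rfl
      obtain rfl : b = a := List.singleton_inj.mp hba
      exact hwa
    · exact hw v b hpre
  have hTP : ∀ w ∈ T, P w := by
    intro u hu
    rcases u.eq_nil_or_concat' with rfl | ⟨w, a, rfl⟩
    · exact hroot
    obtain ⟨-, hw, hwa⟩ := (mem_snoc w a).mp hu
    simpa only [hwa] using hfP ⟨w, hw⟩ (γ (w ++ [a]))
  refine ⟨T, ⟨fun v a hva => by simp at hva, fun u hu v hvu w a hwa => hu w a (hwa.trans hvu)⟩,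
    hTP, fun w hw c => Set.ncard_eq_one.mpr ⟨f ⟨w, hTP w hw⟩ c, ?_⟩⟩
  ext a
  simp only [Set.mem_ofPred_eq, Set.mem_singleton_iff, mem_snoc, hw, true_and]
  constructor
  · rintro ⟨⟨_, hwa⟩, rfl⟩
    exact hwa.symm
  · rintro rfl
    have hc := hfγ ⟨w, hTP w hw⟩ c
    exact ⟨⟨hTP w hw, by rw [hc]⟩, hc⟩

theorem stmt11_general (D N : ℕ)
    (γ : List (Fin N) → Fin D)
    (S : Set (List (Fin N))) (hS : IsSubtree S)
    -- For every subtree `R` of type (II), `S ∩ R` is infinite.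
    (h : ∀ R : Set (List (Fin N)), IsSubtree R →
      (∀ w ∈ R, ∃ c : Fin D, ∀ a : Fin N, (w ++ [a] ∈ R ↔ γ (w ++ [a]) = c)) →
      (S ∩ R).Infinite) :
    -- `S` contains a subtree of type (I).
    ∃ S' ⊆ S, IsSubtree S' ∧ ∀ w ∈ S', ∀ c : Fin D,
      {a : Fin N | w ++ [a] ∈ S' ∧ γ (w ++ [a]) = c}.ncard = 1 := by
  have hroot : TypeIIDense γ S [] := fun R hR hII => h R hR.isSubtree hII
  obtain ⟨T, hT, hTdense, hTI⟩ :=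
    exists_typeI_subtree γ (TypeIIDense γ S) hroot fun w hw c => hw.exists_succ γ c
  exact ⟨T, fun w hw => (hTdense w hw).mem γ hS, hT, hTI⟩

theorem stmt11 (D N : ℕ) (hD : 0 < D) (hN : 0 < N) (hDN : D ∣ N)
    (γ : List (Fin N) → Fin D)
    -- `γ` is a regular `D`-coloring: each vertex has exactly `N / D`
    -- successors of each color.
    (hreg : ∀ w : List (Fin N), ∀ c : Fin D,
      {a : Fin N | γ (w ++ [a]) = c}.ncard = N / D)
    (S : Set (List (Fin N))) (hS : IsSubtree S)
    -- For every subtree `R` of type (II), `S ∩ R` is infinite.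
    (h : ∀ R : Set (List (Fin N)), IsSubtree R →
      (∀ w ∈ R, ∃ c : Fin D, ∀ a : Fin N, (w ++ [a] ∈ R ↔ γ (w ++ [a]) = c)) →
      (S ∩ R).Infinite) :
    -- `S` contains a subtree of type (I).
    ∃ S' ⊆ S, IsSubtree S' ∧ ∀ w ∈ S', ∀ c : Fin D,
      {a : Fin N | w ++ [a] ∈ S' ∧ γ (w ++ [a]) = c}.ncard = 1 :=
  stmt11_general D N γ S hS h
end

section
/- Let i and j be real numbers with 0 < j ≤ i < 1 and i + j = 1, let κ ≥ 1 and c > 0, let I ⊆ ℝ be an interval, and let f : ℝ → ℝ be differentiable on I with |f′(x)| ≤ κ − 1 for all x ∈ I. Let q be a positive integer and p, r ∈ ℤ with p/q ∈ I and |f(p/q) − r/q| < κ c / q^{1+j}. Let A, B, C ∈ ℤ satisfy A p + B r + C q = 0, |A| ≤ q^i and |B| ≤ q^j, and define F(x) := A x + B f(x) + C for x ∈ I. Then: (1) |F(p/q)| < κ c / q; (2) for every x ∈ I with |x − p/q| < c/q^{1+i} one has |F(x) − F(p/q)| < κ c / q, and hence |F(x)| < 2κ c / q; (3) for every x ∈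 I with |F(x)| < 2κ c / q one has |F(x) − F(p/q)| < 3κ c / q. -/
theorem stmt16 (i j κ c : ℝ) (I : Set ℝ) (f f' : ℝ → ℝ)
    (hj0 : 0 < j) (hji : j ≤ i) (hi1 : i < 1) (hij : i + j = 1)
    (hκ : 1 ≤ κ) (hc : 0 < c)
    (hI : I.OrdConnected)
    (hf : ∀ x ∈ I, HasDerivWithinAt f (f' x) I x)
    (hf' : ∀ x ∈ I, |f' x| ≤ κ - 1)
    (q : ℕ) (hq : 0 < q) (p r : ℤ)
    (hpq : (p : ℝ) / q ∈ I)
    (hfr : |f ((p : ℝ) / q) - (r : ℝ) / q| < κ * c / (q : ℝ) ^ (1 + j))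
    (A B C : ℤ) (hABC : A * p + B * r + C * q = 0)
    (hA : (|A| : ℝ) ≤ (q : ℝ) ^ i) (hB : (|B| : ℝ) ≤ (q : ℝ) ^ j)
    (F : ℝ → ℝ) (hF : ∀ x, F x = (A : ℝ) * x + (B : ℝ) * f x + (C : ℝ)) :
    |F ((p : ℝ) / q)| < κ * c / q ∧
    (∀ x ∈ I, |x - (p : ℝ) / q| < c / (q : ℝ) ^ (1 + i) →
      |F x - F ((p : ℝ) / q)| < κ * c / q ∧ |F x| < 2 * κ * c / q) ∧
    (∀ x ∈ I, |F x| < 2 * κ * c / q → |F x - F ((p : ℝ) / q)| < 3 * κ * c / q) := by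
  have hq0 : (0 : ℝ) < q := by exact_mod_cast hq
  have hq1 : (1 : ℝ) ≤ q := by exact_mod_cast hq
  have hqi : (0 : ℝ) < (q : ℝ) ^ i := Real.rpow_pos_of_pos hq0 i
  have hqj : (0 : ℝ) < (q : ℝ) ^ j := Real.rpow_pos_of_pos hq0 j
  have hqji : (q : ℝ) ^ j ≤ (q : ℝ) ^ i := Real.rpow_le_rpow_of_exponent_le hq1 hji
  have hq1j : (q : ℝ) ^ (1 + j) = q * (q : ℝ) ^ j := by
    rw [Real.rpow_add hq0, Real.rpow_one]
  have hq1i : (q : ℝ) ^ (1 + i) = q * (q : ℝ) ^ i := by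
    rw [Real.rpow_add hq0, Real.rpow_one]
  have hABC' : (A : ℝ) * p + (B : ℝ) * r + (C : ℝ) * q = 0 := by exact_mod_cast hABC
  have hzero : (A : ℝ) * ((p : ℝ) / q) + (B : ℝ) * ((r : ℝ) / q) + (C : ℝ) = 0 := by
    field_simp
    linarith
  have key1 : F ((p : ℝ) / q) = (B : ℝ) * (f ((p : ℝ) / q) - (r : ℝ) / q) := by
    rw [hF]; linear_combination hzero
  have hB' : |(B : ℝ)| ≤ (q : ℝ) ^ j := by push_cast at hB ⊢; exact hB
  have hA' : |(A : ℝ)| ≤ (q : ℝ) ^ i := by push_cast at hA ⊢; exact hA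
  have h1 : |F ((p : ℝ) / q)| < κ * c / q := by
    rw [key1, abs_mul]
    calc |(B : ℝ)| * |f ((p : ℝ) / q) - (r : ℝ) / q|
        ≤ (q : ℝ) ^ j * |f ((p : ℝ) / q) - (r : ℝ) / q| := by gcongr
      _ < (q : ℝ) ^ j * (κ * c / (q : ℝ) ^ (1 + j)) := by
          exact mul_lt_mul_of_pos_left hfr hqj
      _ = κ * c / q := by rw [hq1j]; field_simp
  have hconv : Convex ℝ I := hI.convex
  have lip : ∀ x ∈ I, |f x - f ((p : ℝ) / q)| ≤ (κ - 1) * |x - (p : ℝ) / q| := by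
    intro x hx
    have := hconv.norm_image_sub_le_of_norm_hasDerivWithin_le hf
      (fun y hy => by rw [Real.norm_eq_abs]; exact hf' y hy) hpq hx
    simpa [Real.norm_eq_abs] using this
  have h2 : ∀ x ∈ I, |x - (p : ℝ) / q| < c / (q : ℝ) ^ (1 + i) →
      |F x - F ((p : ℝ) / q)| < κ * c / q := by
    intro x hx hxd
    have hdiff : F x - F ((p : ℝ) / q) =
        (A : ℝ) * (x - (p : ℝ) / q) + (B : ℝ) * (f x - f ((p : ℝ) / q)) := by
      rw [hF, hF]; ring
    have hκi : 0 < κ * (q : ℝ) ^ i := by positivity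
    calc |F x - F ((p : ℝ) / q)|
        ≤ |(A : ℝ)| * |x - (p : ℝ) / q| + |(B : ℝ)| * |f x - f ((p : ℝ) / q)| := by
          rw [hdiff]; exact (abs_add_le _ _).trans (by rw [abs_mul, abs_mul])
      _ ≤ (q : ℝ) ^ i * |x - (p : ℝ) / q| + (q : ℝ) ^ j * ((κ - 1) * |x - (p : ℝ) / q|) := by
          gcongr <;> first
            | exact lip x hx
            | linarith
      _ ≤ κ * (q : ℝ) ^ i * |x - (p : ℝ) / q| := by
          nlinarith [abs_nonneg (x - (p : ℝ) / q), mul_nonneg (sub_nonneg.mpr hκ)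
            (sub_nonneg.mpr hqji)]
      _ < κ * (q : ℝ) ^ i * (c / (q : ℝ) ^ (1 + i)) := by
          exact mul_lt_mul_of_pos_left hxd hκi
      _ = κ * c / q := by rw [hq1i]; field_simp
  refine ⟨h1, fun x hx hxd => ?_, fun x _ hFx => ?_⟩
  · have := h2 x hx hxd
    refine ⟨this, ?_⟩
    calc |F x| ≤ |F x - F ((p : ℝ) / q)| + |F ((p : ℝ) / q)| := by
          simpa using abs_add_le (F x - F ((p : ℝ) / q)) (F ((p : ℝ) / q))
      _ < κ * c / q + κ * c / q := by linarith
      _ = 2 * κ * c / q := by ring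
  · calc |F x - F ((p : ℝ) / q)| ≤ |F x| + |F ((p : ℝ) / q)| := abs_sub _ _
      _ < 2 * κ * c / q + κ * c / q := by linarith
      _ = 3 * κ * c / q := by ring
end

section
/- Let i and j be real numbers with 0 < j ≤ i < 1 and i + j = 1, let a, b ∈ ℝ, set κ := |a| + 1, let c > 0 and let ε be a real number with 0 ≤ ε ≤ 1/j. Suppose c₀ > 0 satisfies q^{1/j − ε} · max{‖qa‖, ‖qb‖} ≥ c₀ for every positive integer q. Let q be a positive integer, let A, B, C ∈ ℤ with (A, B) ≠ (0, 0), |A| ≤ q^i and |B| ≤ q^j, set E := A + B a, and let x ∈ ℝ satisfy |E x + B b + C| < 2κ c / q. Then q^{1 − jε} · |E| · max{1, |x|} ≥ min{1, c₀ − 2κ c}. -/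
lemma dnI_le_int (t : ℝ) (n : ℤ) : distNearestInt t ≤ |t - n| := round_le t n

theorem stmt18 (i j a b c c₀ ε : ℝ)
    (hj0 : 0 < j) (hji : j ≤ i) (hi1 : i < 1) (hij : i + j = 1)
    (hc : 0 < c) (hε0 : 0 ≤ ε) (hε1 : ε ≤ 1 / j) (hc₀ : 0 < c₀)
    (hdio : ∀ q : ℕ, 0 < q →
      c₀ ≤ (q : ℝ) ^ (1 / j - ε) *
        max (distNearestInt ((q : ℝ) * a)) (distNearestInt ((q : ℝ) * b)))
    (q : ℕ) (hq : 0 < q)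
    (A B C : ℤ) (hAB : (A, B) ≠ (0, 0))
    (hA : (|A| : ℝ) ≤ (q : ℝ) ^ i) (hB : (|B| : ℝ) ≤ (q : ℝ) ^ j)
    (x : ℝ)
    (hx : |((A : ℝ) + (B : ℝ) * a) * x + (B : ℝ) * b + (C : ℝ)| <
      2 * (|a| + 1) * c / q) :
    min 1 (c₀ - 2 * (|a| + 1) * c) ≤
      (q : ℝ) ^ (1 - j * ε) * |(A : ℝ) + (B : ℝ) * a| * max 1 |x| := by
  have hq1 : (1 : ℝ) ≤ (q : ℝ) := by exact_mod_cast hq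
  have hjε : j * ε ≤ 1 := by
    calc j * ε ≤ j * (1 / j) := by gcongr
    _ = 1 := by field_simp
  have hexp0 : 0 ≤ 1 - j * ε := by linarith
  have hq0 : (0 : ℝ) < q := by positivity
  have hqpow1 : (1 : ℝ) ≤ (q : ℝ) ^ (1 - j * ε) := Real.one_le_rpow hq1 hexp0
  set E := (A : ℝ) + (B : ℝ) * a with hE
  set κ := |a| + 1 with hκ
  rcases eq_or_ne B 0 with hB0 | hB0
  · -- B = 0, so A ≠ 0 and |E| ≥ 1
    have hA0 : A ≠ 0 := by
      intro h; exact hAB (by simp [h, hB0])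
    have hE1 : (1 : ℝ) ≤ |E| := by
      have : (1 : ℝ) ≤ |(A : ℝ)| := by
        exact_mod_cast Int.one_le_abs hA0
      simpa [hE, hB0] using this
    calc min 1 (c₀ - 2 * κ * c) ≤ 1 := min_le_left _ _
    _ ≤ (q : ℝ) ^ (1 - j * ε) := hqpow1
    _ ≤ (q : ℝ) ^ (1 - j * ε) * |E| := le_mul_of_one_le_right (by positivity) hE1
    _ ≤ (q : ℝ) ^ (1 - j * ε) * |E| * max 1 |x| :=
        le_mul_of_one_le_right (by positivity) (le_max_left _ _)
  · -- B ≠ 0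
    set m := B.natAbs with hm
    have hm0 : 0 < m := Int.natAbs_pos.mpr hB0
    have hmr : (m : ℝ) = |(B : ℝ)| := by
      rw [hm]; push_cast [Nat.cast_natAbs]; simp
    have hm1 : (1 : ℝ) ≤ (m : ℝ) := by exact_mod_cast hm0
    have key := hdio m hm0
    -- bound dnI(m a) ≤ |E|
    have h1 : distNearestInt ((m : ℝ) * a) ≤ |E| := by
      rcases le_or_gt 0 (B : ℝ) with h | h
      · have hh : (m : ℝ) = (B : ℝ) := by rw [hmr, abs_of_nonneg h]
        calc distNearestInt ((m : ℝ) * a) ≤ |(m : ℝ) * a - ((-A : ℤ) : ℝ)| := dnI_le_int _ _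
        _ = |E| := by rw [hh, hE]; push_cast; ring_nf
      · have hh : (m : ℝ) = -(B : ℝ) := by rw [hmr, abs_of_neg h]
        calc distNearestInt ((m : ℝ) * a) ≤ |(m : ℝ) * a - ((A : ℤ) : ℝ)| := dnI_le_int _ _
        _ = |-E| := by rw [hh, hE]; push_cast; ring_nf
        _ = |E| := abs_neg E
    -- bound dnI(m b) ≤ 2κc/q + |E| * max 1 |x|
    have hEx : |(B : ℝ) * b + C| ≤ 2 * κ * c / q + |E| * max 1 |x| := by
      have h2 : |(B : ℝ) * b + C| ≤ |E * x + ((B:ℝ) * b + C)| + |E * x| := by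
        calc |(B : ℝ) * b + C| = |E * x + ((B:ℝ) * b + C) - E * x| := by ring_nf
        _ ≤ |E * x + ((B:ℝ) * b + C)| + |E * x| := abs_sub _ _
      have h3 : |E * x + ((B:ℝ)*b + C)| < 2 * κ * c / q := by
        have : E * x + ((B:ℝ)*b + C) = E * x + (B:ℝ)*b + C := by ring
        rw [this]; exact hx
      have h4 : |E * x| ≤ |E| * max 1 |x| := by
        rw [abs_mul]; gcongr; exact le_max_right _ _
      linarith
    have h2 : distNearestInt ((m : ℝ) * b) ≤ 2 * κ * c / q + |E| * max 1 |x| := by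
      rcases le_or_gt 0 (B : ℝ) with h | h
      · have hh : (m : ℝ) = (B : ℝ) := by rw [hmr, abs_of_nonneg h]
        calc distNearestInt ((m : ℝ) * b) ≤ |(m : ℝ) * b - ((-C : ℤ) : ℝ)| := dnI_le_int _ _
        _ = |(B : ℝ) * b + C| := by rw [hh]; push_cast; ring_nf
        _ ≤ _ := hEx
      · have hh : (m : ℝ) = -(B : ℝ) := by rw [hmr, abs_of_neg h]
        calc distNearestInt ((m : ℝ) * b) ≤ |(m : ℝ) * b - ((C : ℤ) : ℝ)| := dnI_le_int _ _
        _ = |-((B : ℝ) * b + C)| := by rw [hh]; push_cast; ring_nf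
        _ = |(B : ℝ) * b + C| := abs_neg _
        _ ≤ _ := hEx
    -- bound (m)^{1/j-ε} ≤ q^{1-jε}
    have hexp2 : 0 ≤ 1 / j - ε := by
      have : 0 < 1 / j := by positivity
      linarith
    have hpow : (m : ℝ) ^ (1 / j - ε) ≤ (q : ℝ) ^ (1 - j * ε) := by
      have hmq : (m : ℝ) ≤ (q : ℝ) ^ j := by
        rw [hmr]; exact_mod_cast hB
      calc (m : ℝ) ^ (1 / j - ε) ≤ ((q : ℝ) ^ j) ^ (1 / j - ε) := by
            exact Real.rpow_le_rpow (by positivity) hmq hexp2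
      _ = (q : ℝ) ^ (j * (1 / j - ε)) := (Real.rpow_mul hq0.le _ _).symm
      _ = (q : ℝ) ^ (1 - j * ε) := by
          congr 1; field_simp
    -- combine
    have hM : max (distNearestInt ((m : ℝ) * a)) (distNearestInt ((m : ℝ) * b))
        ≤ 2 * κ * c / q + |E| * max 1 |x| := by
      apply max_le
      · have : |E| ≤ |E| * max 1 |x| := le_mul_of_one_le_right (abs_nonneg _) (le_max_left _ _)
        have hpos : 0 ≤ 2 * κ * c / q := by positivity
        linarith
      · exact h2
    have hd0 : 0 ≤ max (distNearestInt ((m : ℝ) * a)) (distNearestInt ((m : ℝ) * b)) :=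
      le_max_of_le_left (abs_nonneg _)
    have key2 : c₀ ≤ (q : ℝ) ^ (1 - j * ε) * (2 * κ * c / q + |E| * max 1 |x|) := by
      calc c₀ ≤ (m : ℝ) ^ (1 / j - ε) * _ := key
      _ ≤ (q : ℝ) ^ (1 - j * ε) * _ := by gcongr
      _ ≤ _ := by gcongr
    have hPq : (q : ℝ) ^ (1 - j * ε) ≤ (q : ℝ) := by
      calc (q : ℝ) ^ (1 - j * ε) ≤ (q : ℝ) ^ (1 : ℝ) :=
            Real.rpow_le_rpow_of_exponent_le hq1 (by nlinarith [mul_nonneg hj0.le hε0])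
      _ = (q : ℝ) := Real.rpow_one _
    have hqq : (q : ℝ) ^ (1 - j * ε) * (2 * κ * c / q) ≤ 2 * κ * c := by
      have heq : (q : ℝ) ^ (1 - j * ε) * (2 * κ * c / q)
          = 2 * κ * c * ((q : ℝ) ^ (1 - j * ε) / q) := by ring
      have h6 : (q : ℝ) ^ (1 - j * ε) / q ≤ 1 := (div_le_one hq0).mpr hPq
      have hκc : (0 : ℝ) ≤ 2 * κ * c := by positivity
      calc (q : ℝ) ^ (1 - j * ε) * (2 * κ * c / q)
          = 2 * κ * c * ((q : ℝ) ^ (1 - j * ε) / q) := heq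
      _ ≤ 2 * κ * c * 1 := by gcongr
      _ = 2 * κ * c := by ring
    calc min 1 (c₀ - 2 * κ * c) ≤ c₀ - 2 * κ * c := min_le_right _ _
    _ ≤ (q : ℝ) ^ (1 - j * ε) * (|E| * max 1 |x|) := by
        have hthis := key2
        rw [mul_add] at hthis
        exact (sub_le_sub hthis hqq).trans_eq (by ring)
    _ = (q : ℝ) ^ (1 - j * ε) * |E| * max 1 |x| := by ring
end
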